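/- arXiv:1109.0832 — 2 statements merged into one kernel-verified Lean document; each statement's English description precedes it below -/
import Mathlib

section
/- For every (N,p,k) environment ω, the expected hitting time of N for the walk started at 0 satisfies E^0_ω[T_N] ≥ N²/((2p−1)k + 1). -/
open MeasureTheory Filter Finset Matrix
open scoped ENNReal
noncomputable section

/-- One-step transition probabilities of the nearest-neighbor random walk on `ℤ`
in the environment `ω`: from `z` the walk moves to `z+1` with probability `ω z`
and to `z-1` with probability `1 - ω z`. -/
def envStep (ω : ℤ → ℝ) (z y : ℤ) : ℝ :=
  if y = z + 1 then ω z else if y = z - 1 then 1 - ω z else 0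

/-- `IsWalkLaw step x P` : `P` is the law of the Markov chain on `ℤ` started at `x`
with one-step transition probabilities `step`, viewed as a measure on trajectories. -/
def IsWalkLaw (step : ℤ → ℤ → ℝ) (x : ℤ) (P : Measure (ℕ → ℤ)) : Prop :=
  IsProbabilityMeasure P ∧
    ∀ (n : ℕ) (path : ℕ → ℤ),
      P {f | ∀ i ≤ n, f i = path i} =
        (if path 0 = x then (1 : ℝ≥0∞) else 0) *
          ∏ i ∈ Finset.range n, ENNReal.ofReal (step (path i) (path (i + 1)))

/-- A `(p,λ)` environment : each site is a `(1/2,1/2)` or a `(p,1-p)` site and the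
upper density of `(p,1-p)` sites on the nonnegative integers equals `λ`. -/
def IsPLEnv (p lam : ℝ) (ω : ℤ → ℝ) : Prop :=
  (∀ x : ℤ, ω x = 1 / 2 ∨ ω x = p) ∧
    Filter.limsup
      (fun n : ℕ => (∑ x ∈ Finset.range (n + 1), if ω (x : ℤ) = p then (1 : ℝ) else 0) / (n + 1))
      Filter.atTop = lam

/-- First hitting time of `z` by the trajectory `f` (`⊤` if `z` is never visited). -/
def hitTime (f : ℕ → ℤ) (z : ℤ) : ℕ∞ :=
  ⨅ (m : ℕ) (_ : f m = z), (m : ℕ∞)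

/-- Transition probabilities of the walk in environment `ω` on `{0,…,N}` with an
absorbing state at `N` (everywhere else it is the nearest-neighbor walk in `ω`). -/
def absorbStep (N : ℕ) (ω : ℤ → ℝ) (z y : ℤ) : ℝ :=
  if z = (N : ℤ) then (if y = (N : ℤ) then 1 else 0) else envStep ω z y

/-- An `(N,p,k)` environment: values in `[0,1]`, reflection at `0` (`ω 0 = 1`),
`k` drift sites `0 < l₁ < … < l_k < N` where `ω = p`, and `ω = 1/2` at all other
sites of `{1,…,N-1}`. -/
def IsNpkEnv (N k : ℕ) (p : ℝ) (ω : ℤ → ℝ) : Prop :=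
  (∀ x : ℤ, 0 ≤ ω x ∧ ω x ≤ 1) ∧
    ∃ l : Fin k → ℤ, StrictMono l ∧ (∀ i, 0 < l i ∧ l i < (N : ℤ)) ∧
      ω 0 = 1 ∧ (∀ i, ω (l i) = p) ∧
        ∀ x : ℤ, 0 < x → x < (N : ℤ) → (∀ i, l i ≠ x) → ω x = 1 / 2

/-- y-sequence: y 0 = 1, y (x+1) = (q*y x if drift else y x) + 1 -/
def yseq (q : ℝ) (b : ℕ → Bool) : ℕ → ℝ
  | 0 => 1
  | x+1 => (if b (x+1) then q * yseq q b x else yseq q b x) + 1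

def R1seq (q : ℝ) (b : ℕ → Bool) : ℕ → ℝ
  | 0 => 0
  | x+1 => R1seq q b x + (if b (x+1) then yseq q b x else 0)

def R2seq (q : ℝ) (b : ℕ → Bool) : ℕ → ℝ
  | 0 => 0
  | x+1 => R2seq q b x + (if b (x+1) then (yseq q b x)^2 else 0)

def cntseq (b : ℕ → Bool) : ℕ → ℕ
  | 0 => 0
  | x+1 => cntseq b x + (if b (x+1) then 1 else 0)

variable {q : ℝ} {b : ℕ → Bool}

lemma yseq_ge_one (hq0 : 0 ≤ q) : ∀ x, 1 ≤ yseq q b x := by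
  intro x
  induction x with
  | zero => simp [yseq]
  | succ n ih =>
    simp only [yseq]
    have : 0 ≤ q * yseq q b n := mul_nonneg hq0 (by linarith)
    split <;> nlinarith

lemma R1seq_nonneg (hq0 : 0 ≤ q) : ∀ x, 0 ≤ R1seq q b x := by
  intro x
  induction x with
  | zero => simp [R1seq]
  | succ n ih =>
    simp only [R1seq]
    have := yseq_ge_one (b := b) hq0 n
    split <;> nlinarith

lemma R2seq_nonneg : ∀ x, 0 ≤ R2seq q b x := by
  intro x
  induction x with
  | zero => simp [R2seq]
  | succ n ih =>
    simp only [R2seq]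
    have := sq_nonneg (yseq q b n)
    split <;> nlinarith

lemma yseq_telescope : ∀ x : ℕ, ((x:ℝ) + 1) = yseq q b x + (1 - q) * R1seq q b x := by
  intro x
  induction x with
  | zero => simp [yseq, R1seq]
  | succ n ih =>
    simp only [yseq, R1seq]
    push_cast
    split <;> ring_nf <;> ring_nf at ih <;> linarith

lemma yseq_sum_id : ∀ x : ℕ, 2 * (∑ z ∈ range (x+1), yseq q b z) - ((x:ℝ)+1) =
    (yseq q b x)^2 + (1 - q^2) * R2seq q b x := by
  intro x
  induction x with
  | zero => norm_num [yseq, R2seq]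
  | succ n ih =>
    rw [sum_range_succ]
    simp only [yseq, R2seq]
    push_cast
    push_cast at ih
    split <;> ring_nf <;> ring_nf at ih <;> nlinarith [sq_nonneg (yseq q b n)]

lemma R1seq_sq_le : ∀ x, (R1seq q b x)^2 ≤ (cntseq b x : ℝ) * R2seq q b x := by
  intro x
  induction x with
  | zero => simp [R1seq, R2seq, cntseq]
  | succ n ih =>
    simp only [R1seq, R2seq, cntseq]
    by_cases hb : b (n+1)
    · simp only [hb, if_true]
      push_cast
      rcases Nat.eq_zero_or_pos (cntseq b n) with h0 | hpos
      · have hR1 : R1seq q b n = 0 := by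
          have := ih; rw [h0] at this; push_cast at this
          nlinarith [sq_nonneg (R1seq q b n)]
        have hR2 : 0 ≤ R2seq q b n := R2seq_nonneg n
        rw [hR1, h0]; push_cast; nlinarith
      · have hc : (0:ℝ) < (cntseq b n : ℝ) := by exact_mod_cast hpos
        have key : (cntseq b n : ℝ) * ((cntseq b n : ℝ) * R2seq q b n + (cntseq b n : ℝ) * (yseq q b n)^2
             + R2seq q b n + (yseq q b n)^2 - (R1seq q b n + yseq q b n)^2)
            = ((cntseq b n : ℝ) * yseq q b n - R1seq q b n)^2
              + ((cntseq b n : ℝ) + 1) * ((cntseq b n : ℝ) * R2seq q b n - (R1seq q b n)^2) := by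
          ring
        nlinarith [sq_nonneg ((cntseq b n : ℝ) * yseq q b n - R1seq q b n), mul_pos hc hc]
    · simp only [hb, if_false]
      push_cast
      linarith

/-- Core inequality:  (n+1)² ≤ (1 + K(1-q)/(1+q)) · T  in the cleared-denominator form. -/
lemma core_cleared (hq0 : 0 ≤ q) (hq1 : q < 1) (n : ℕ) (K : ℕ) (hK : cntseq b n = K)
    (hK1 : 1 ≤ K) :
    (1 + q) * ((n:ℝ)+1)^2 ≤ ((1 + q) + (K : ℝ) * (1 - q)) *
      (2 * (∑ z ∈ range (n+1), yseq q b z) - ((n:ℝ)+1)) := by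
  set y := yseq q b n with hy
  set R1 := R1seq q b n with hR1
  set R2 := R2seq q b n with hR2
  have hT : 2 * (∑ z ∈ range (n+1), yseq q b z) - ((n:ℝ)+1) = y^2 + (1 - q^2) * R2 :=
    yseq_sum_id n
  have hNid : ((n:ℝ) + 1) = y + (1 - q) * R1 := yseq_telescope n
  have hCS : R1^2 ≤ (K : ℝ) * R2 := by rw [← hK]; exact_mod_cast R1seq_sq_le n
  have hKpos : (1:ℝ) ≤ (K:ℝ) := by exact_mod_cast hK1
  have hR2n : 0 ≤ R2 := R2seq_nonneg n
  rw [hT, hNid]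
  -- K * ((t+Ks)T - t N²) = s[(Ky - t R1)² + (t² + Kst)(K R2 - R1²)]
  nlinarith [sq_nonneg ((K:ℝ) * y - (1+q) * R1), mul_nonneg (mul_nonneg (by linarith : (0:ℝ) ≤ 1 - q) (by nlinarith [sq_nonneg (1+q), mul_nonneg (mul_nonneg (by linarith : (0:ℝ) ≤ (K:ℝ)) (by linarith : (0:ℝ) ≤ 1-q)) (by linarith : (0:ℝ) ≤ 1+q)] : (0:ℝ) ≤ (1+q)^2 + (K:ℝ)*(1-q)*(1+q))) (by nlinarith : (0:ℝ) ≤ (K:ℝ)*R2 - R1^2), sq_nonneg R1, mul_nonneg (by linarith : (0:ℝ) ≤ 1 - q) (sq_nonneg ((K:ℝ)*y - (1+q)*R1))]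
def driftB {k : ℕ} (l : Fin k → ℤ) (x : ℕ) : Bool := decide (∃ i, l i = (x:ℤ))

lemma cntseq_eq_card (b : ℕ → Bool) (hb0 : b 0 = false) :
    ∀ n, cntseq b n = ((range (n+1)).filter (fun x => b x = true)).card := by
  intro n
  induction n with
  | zero =>
    rw [show ((range 1) : Finset ℕ) = {0} from rfl, filter_singleton, hb0]
    simp [cntseq]
  | succ n ih =>
    rw [range_add_one, filter_insert]
    simp only [cntseq, ih]
    by_cases hb : b (n+1) = true
    · rw [if_pos hb, if_pos hb, card_insert_of_notMem (by simp)]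
    · rw [if_neg hb, if_neg hb]; simp

lemma cnt_driftB {k N : ℕ} (hN : 1 ≤ N) (l : Fin k → ℤ) (hl : StrictMono l)
    (hlr : ∀ i, 0 < l i ∧ l i < (N:ℤ)) : cntseq (driftB l) (N-1) = k := by
  rw [cntseq_eq_card _ (by
    simp only [driftB, decide_eq_false_iff_not]
    rintro ⟨i, hi⟩
    have := (hlr i).1; omega), Nat.sub_add_cancel hN]
  have himg : (range N).filter (fun x => driftB l x = true) = Finset.image (fun i => (l i).toNat) univ := by
    ext x
    simp only [mem_filter, mem_range, driftB, decide_eq_true_eq, Finset.mem_image, mem_univ,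
      true_and]
    constructor
    · rintro ⟨hx, i, hi⟩
      exact ⟨i, by omega⟩
    · rintro ⟨i, hi⟩
      have h1 := (hlr i).1
      have h2 := (hlr i).2
      constructor
      · omega
      · exact ⟨i, by omega⟩
  rw [himg, card_image_of_injective _ (fun i j hij => hl.injective (by
      have := (hlr i).1; have := (hlr j).1; omega)), card_univ, Fintype.card_fin]

section
variable {k N : ℕ} {p : ℝ} (l : Fin k → ℤ)

lemma hrec (hp : 1/2 < p) (hp1 : p ≤ 1) (ω : ℤ → ℝ)
    (hωp : ∀ i, ω (l i) = p)
    (hωh : ∀ x : ℤ, 0 < x → x < (N:ℤ) → (∀ i, l i ≠ x) → ω x = 1/2) :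
    ∀ z : ℕ, 1 ≤ z → z < N →
      ω (z:ℤ) * (2 * yseq ((1-p)/p) (driftB l) z - 1)
        = 1 + (1 - ω (z:ℤ)) * (2 * yseq ((1-p)/p) (driftB l) (z-1) - 1) := by
  intro z hz1 hzN
  obtain ⟨m, rfl⟩ : ∃ m, z = m + 1 := ⟨z - 1, by omega⟩
  have hp0 : p ≠ 0 := by linarith
  simp only [Nat.add_sub_cancel, yseq]
  by_cases hb : driftB l (m+1) = true
  · rw [if_pos hb]
    obtain ⟨i, hi⟩ : ∃ i, l i = ((m+1 : ℕ) : ℤ) := by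
      simpa [driftB] using hb
    have : ω ((m+1 : ℕ) : ℤ) = p := by rw [← hi, hωp]
    rw [this]
    field_simp
    ring
  · rw [if_neg hb]
    have : ω ((m+1 : ℕ) : ℤ) = 1/2 := by
      apply hωh
      · positivity
      · exact_mod_cast hzN
      · intro i hi
        exact hb (by simp [driftB]; exact ⟨i, hi⟩)
    rw [this]
    ring
end
def cI {N : ℕ} (z : Fin N) : ℤ := ((z : ℕ) : ℤ)

def Kf (N : ℕ) (ω : ℤ → ℝ) (z y : Fin N) : ℝ≥0∞ := ENNReal.ofReal (envStep ω (cI z) (cI y))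

def Tker (N : ℕ) (ω : ℤ → ℝ) (u : Fin N → ℝ≥0∞) : Fin N → ℝ≥0∞ :=
  fun z => ∑ y, Kf N ω z y * u y

def vs (N : ℕ) (ω : ℤ → ℝ) (n : ℕ) : Fin N → ℝ≥0∞ := (Tker N ω)^[n] (fun _ => 1)

variable {N : ℕ} {ω : ℤ → ℝ}

lemma Kf_eq (z y : Fin N) : Kf N ω z y =
    (if cI y = cI z + 1 then ENNReal.ofReal (ω (cI z)) else 0) +
    (if cI y = cI z - 1 then ENNReal.ofReal (1 - ω (cI z)) else 0) := by
  rw [Kf, envStep]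
  split_ifs with h1 h2 <;> simp_all <;> omega

lemma sum_ite_cI_le (c : ℤ) (t : ℝ≥0∞) : (∑ y : Fin N, if cI y = c then t else 0) ≤ t := by
  by_cases hc : ∃ d : Fin N, cI d = c
  · obtain ⟨d, hd⟩ := hc
    have he : ∀ y : Fin N, (cI y = c) ↔ y = d := by
      intro y
      constructor
      · intro h
        apply Fin.ext
        have : ((y:ℕ):ℤ) = ((d:ℕ):ℤ) := by rw [← hd] at h; exact h
        exact_mod_cast this
      · rintro rfl; exact hd
    simp only [he]
    simp [Finset.sum_ite_eq']
  · have h0 : ∀ y : Fin N, (if cI y = c then t else 0) = 0 :=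
      fun y => if_neg (fun h => hc ⟨y, h⟩)
    simp [h0]

lemma lemeval (hω01 : ∀ x, 0 ≤ ω x ∧ ω x ≤ 1) (z : Fin N) (u : Fin N → ℝ≥0∞) (A B : ℝ≥0∞)
    (hA : ∀ (h : (z:ℕ)+1 < N), u ⟨(z:ℕ)+1, h⟩ ≤ A) (hB : ∀ y, u y ≤ B) :
    Tker N ω u z ≤ ENNReal.ofReal (ω (cI z)) * A + ENNReal.ofReal (1 - ω (cI z)) * B := by
  have step1 : Tker N ω u z ≤
      (∑ y : Fin N, if cI y = cI z + 1 then ENNReal.ofReal (ω (cI z)) * A else 0) +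
      (∑ y : Fin N, if cI y = cI z - 1 then ENNReal.ofReal (1 - ω (cI z)) * B else 0) := by
    rw [Tker, ← Finset.sum_add_distrib]
    apply Finset.sum_le_sum
    intro y _
    rw [Kf_eq, add_mul]
    gcongr
    · split_ifs with h1
      · -- y = z+1
        have hy : y = ⟨(z:ℕ)+1, by have := y.isLt; have : ((y:ℕ):ℤ) = (z:ℕ)+1 := h1; omega⟩ := by
          apply Fin.ext
          have : ((y:ℕ):ℤ) = ((z:ℕ):ℤ)+1 := h1
          simp only []
          omega
        have hA' : u y ≤ A := by
          rw [hy]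
          exact hA _
        exact mul_le_mul_right hA' _
      · simp
    · split_ifs with h1
      · exact mul_le_mul_right (hB y) _
      · simp
  exact step1.trans (add_le_add (sum_ite_cI_le _ _) (sum_ite_cI_le _ _))

lemma vs_le_one (hω01 : ∀ x, 0 ≤ ω x ∧ ω x ≤ 1) : ∀ n (z : Fin N), vs N ω n z ≤ 1 := by
  intro n
  induction n with
  | zero => intro z; simp [vs]
  | succ n ih =>
    intro z
    have : vs N ω (n+1) z = Tker N ω (vs N ω n) z := by
      rw [vs, Function.iterate_succ_apply']; rfl
    rw [this]
    have := lemeval hω01 z (vs N ω n) 1 1 (fun h => ih _) ih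
    refine this.trans ?_
    rw [mul_one, mul_one, ← ENNReal.ofReal_add (hω01 _).1 (by linarith [(hω01 (cI z)).2])]
    simp

lemma Tker_mono {u u' : Fin N → ℝ≥0∞} (h : ∀ z, u z ≤ u' z) : ∀ z, Tker N ω u z ≤ Tker N ω u' z :=
  fun z => Finset.sum_le_sum (fun y _ => mul_le_mul_right (h y) _)

lemma Tker_iter_mono (M : ℕ) {u u' : Fin N → ℝ≥0∞} (h : ∀ z, u z ≤ u' z) :
    ∀ z, (Tker N ω)^[M] u z ≤ (Tker N ω)^[M] u' z := by
  induction M generalizing u u' with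
  | zero => exact h
  | succ M ih =>
    rw [Function.iterate_succ_apply', Function.iterate_succ_apply']
    exact Tker_mono (ih h)

lemma Tker_smul (a : ℝ≥0∞) (u : Fin N → ℝ≥0∞) :
    Tker N ω (fun y => a * u y) = fun z => a * Tker N ω u z := by
  funext z
  rw [Tker, Tker, Finset.mul_sum]
  congr 1
  funext y
  ring

lemma Tker_iter_smul (M : ℕ) (a : ℝ≥0∞) (u : Fin N → ℝ≥0∞) :
    (Tker N ω)^[M] (fun y => a * u y) = fun z => a * (Tker N ω)^[M] u z := by
  induction M with
  | zero => rfl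
  | succ M ih =>
    rw [Function.iterate_succ_apply', Function.iterate_succ_apply', ih, Tker_smul]

lemma contra (hω01 : ∀ x, 0 ≤ ω x ∧ ω x ≤ 1) (hωhalf : ∀ z : Fin N, 1/2 ≤ ω (cI z)) :
    ∀ (j n : ℕ) (z : Fin N), N ≤ (z:ℕ) + j + 1 →
      vs N ω (n + (j+1)) z ≤ ENNReal.ofReal (1 - (1/2:ℝ)^(j+1)) := by
  intro j
  induction j with
  | zero =>
    intro n z hz
    have hiter : vs N ω (n+1) z = Tker N ω (vs N ω n) z := by
      rw [vs, Function.iterate_succ_apply']; rfl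
    rw [hiter]
    have := lemeval hω01 z (vs N ω n) 0 1 (fun h => absurd h (by omega)) (vs_le_one hω01 n)
    refine this.trans ?_
    rw [mul_zero, zero_add, mul_one]
    apply ENNReal.ofReal_le_ofReal
    have := hωhalf z
    norm_num
    linarith
  | succ j ih =>
    intro n z hz
    by_cases hz' : N ≤ (z:ℕ) + j + 1
    · have h1 := ih (n+1) z hz'
      have heq : (n+1) + (j+1) = n + (j+1+1) := by omega
      rw [heq] at h1
      refine h1.trans (ENNReal.ofReal_le_ofReal ?_)
      have : ((1:ℝ)/2)^(j+1+1) ≤ (1/2)^(j+1) :=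
        pow_le_pow_of_le_one (by norm_num) (by norm_num) (by omega)
      linarith
    · have hzeq : (z:ℕ) + j + 2 = N := by omega
      have hlt : (z:ℕ) + 1 < N := by omega
      have hiter : vs N ω (n + (j+1+1)) z = Tker N ω (vs N ω (n + (j+1))) z := by
        rw [show n + (j+1+1) = (n + (j+1)) + 1 from by omega, vs,
          Function.iterate_succ_apply']; rfl
      rw [hiter]
      have hAbound : ∀ (h : (z:ℕ)+1 < N),
          vs N ω (n + (j+1)) ⟨(z:ℕ)+1, h⟩ ≤ ENNReal.ofReal (1 - (1/2:ℝ)^(j+1)) := by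
        intro h
        exact ih n ⟨(z:ℕ)+1, h⟩ (by simp; omega)
      have := lemeval hω01 z (vs N ω (n + (j+1))) (ENNReal.ofReal (1 - (1/2:ℝ)^(j+1))) 1
        hAbound (vs_le_one hω01 _)
      refine this.trans ?_
      rw [mul_one]
      set w := ω (cI z) with hw
      have hw0 : 0 ≤ w := (hω01 _).1
      have hw1 : w ≤ 1 := (hω01 _).2
      have hwh : 1/2 ≤ w := hωhalf z
      have hr1 : ((1:ℝ)/2)^(j+1) ≤ 1 := pow_le_one₀ (by norm_num) (by norm_num)
      have hr0 : (0:ℝ) ≤ (1/2)^(j+1) := by positivity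
      rw [← ENNReal.ofReal_mul hw0, ← ENNReal.ofReal_add (by nlinarith) (by linarith)]
      apply ENNReal.ofReal_le_ofReal
      have : (1/2:ℝ)^(j+1+1) = (1/2)^(j+1) / 2 := by rw [pow_succ]; ring
      rw [this]
      nlinarith

lemma vs_geo (hω01 : ∀ x, 0 ≤ ω x ∧ ω x ≤ 1) (hωhalf : ∀ z : Fin N, 1/2 ≤ ω (cI z))
    (hN : 1 ≤ N) :
    ∀ m (z : Fin N), vs N ω (m * N) z ≤ (ENNReal.ofReal (1 - (1/2:ℝ)^N)) ^ m := by
  intro m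
  induction m with
  | zero => intro z; simp [vs]
  | succ m ih =>
    intro z
    have hsplit : vs N ω ((m+1) * N) z = (Tker N ω)^[N] (vs N ω (m*N)) z := by
      rw [vs, vs, show (m+1)*N = N + m*N from by ring, Function.iterate_add_apply]
    rw [hsplit]
    have h1 : (Tker N ω)^[N] (vs N ω (m*N)) z ≤
        (Tker N ω)^[N] (fun _ => (ENNReal.ofReal (1 - (1/2:ℝ)^N)) ^ m * 1) z := by
      apply Tker_iter_mono
      intro y
      simpa using ih y
    refine h1.trans ?_
    rw [Tker_iter_smul]
    have h2 : (Tker N ω)^[N] (fun _ => (1:ℝ≥0∞)) z ≤ ENNReal.ofReal (1 - (1/2:ℝ)^N) := by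
      have := contra hω01 hωhalf (N-1) 0 z (by omega)
      rw [show 0 + ((N-1)+1) = N from by omega] at this
      rw [show (N-1)+1 = N from by omega] at this
      exact this
    calc (ENNReal.ofReal (1 - (1/2:ℝ)^N)) ^ m * (Tker N ω)^[N] (fun _ => (1:ℝ≥0∞)) z
        ≤ (ENNReal.ofReal (1 - (1/2:ℝ)^N)) ^ m * ENNReal.ofReal (1 - (1/2:ℝ)^N) :=
          mul_le_mul_right h2 _
      _ = (ENNReal.ofReal (1 - (1/2:ℝ)^N)) ^ (m+1) := by rw [pow_succ]

/-! ### Subsolution -/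

def phifun (N : ℕ) (h : ℕ → ℝ) (x : ℕ) : ℝ := ∑ z ∈ Finset.Ico x N, h z

variable {N : ℕ} {ω : ℤ → ℝ} {h : ℕ → ℝ}

lemma phifun_nonneg (hh1 : ∀ z, z < N → 1 ≤ h z) (x : ℕ) : 0 ≤ phifun N h x :=
  Finset.sum_nonneg (fun z hz => by
    have := hh1 z (Finset.mem_Ico.mp hz).2; linarith)

lemma subsol (hω01 : ∀ x, 0 ≤ ω x ∧ ω x ≤ 1) (hω0 : ω 0 = 1) (hN : 2 ≤ N)
    (hh1 : ∀ z, z < N → 1 ≤ h z) (hh0 : h 0 = 1)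
    (hrec : ∀ z : ℕ, 1 ≤ z → z < N → ω (z:ℤ) * h z = 1 + (1 - ω (z:ℤ)) * h (z-1)) :
    ∀ z : Fin N, ENNReal.ofReal (phifun N h (z:ℕ)) ≤
      1 + Tker N ω (fun y => ENNReal.ofReal (phifun N h (y:ℕ))) z := by
  intro z
  set Φ : Fin N → ℝ≥0∞ := fun y => ENNReal.ofReal (phifun N h (y:ℕ)) with hΦ
  have hextract : ∀ y0 : Fin N, Kf N ω z y0 * Φ y0 ≤ Tker N ω Φ z := by
    intro y0
    exact Finset.single_le_sum (f := fun y => Kf N ω z y * Φ y)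
      (fun i _ => zero_le) (Finset.mem_univ y0)
  rcases Nat.lt_trichotomy ((z:ℕ)+1) N with hlt | heq | hgt
  · rcases Nat.eq_zero_or_pos (z:ℕ) with hz0 | hz1
    · -- z = 0
      have hy : Kf N ω z ⟨1, by omega⟩ = 1 := by
        rw [Kf, envStep, if_pos (by simp [cI, hz0]), cI, hz0]
        simp [hω0]
      have h1 : Φ ⟨1, by omega⟩ ≤ Tker N ω Φ z := by
        have := hextract ⟨1, by omega⟩
        rwa [hy, one_mul] at this
      refine le_trans ?_ (add_le_add_right h1 1)
      have hpeel : phifun N h (z:ℕ) = 1 + phifun N h 1 := by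
        rw [hz0, phifun, Finset.sum_eq_sum_Ico_succ_bot (by omega : 0 < N), hh0]; rfl
      rw [hΦ]
      simp only []
      rw [hpeel, ENNReal.ofReal_add (by norm_num) (phifun_nonneg hh1 1), ENNReal.ofReal_one]
    · -- 1 ≤ z, z+1 < N
      set zn := (z:ℕ) with hzn
      have hy1 : Kf N ω z ⟨zn+1, hlt⟩ = ENNReal.ofReal (ω (zn:ℤ)) := by
        rw [Kf, envStep, if_pos]
        · rfl
        · simp [cI]; exact hzn
      have hy2 : Kf N ω z ⟨zn-1, by omega⟩ = ENNReal.ofReal (1 - ω (zn:ℤ)) := by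
        rw [Kf, envStep, if_neg, if_pos]
        · rfl
        · simp only [cI]; push_cast [Nat.cast_sub hz1]; ring
        · simp only [cI]; push_cast [Nat.cast_sub hz1]; omega
      have hne : (⟨zn+1, hlt⟩ : Fin N) ≠ ⟨zn-1, by omega⟩ := by
        simp only [ne_eq, Fin.mk.injEq]; omega
      have hpair : Kf N ω z ⟨zn+1, hlt⟩ * Φ ⟨zn+1, hlt⟩ +
          Kf N ω z ⟨zn-1, by omega⟩ * Φ ⟨zn-1, by omega⟩ ≤ Tker N ω Φ z := by
        have hsub := Finset.sum_le_sum_of_subset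
          (f := fun y => Kf N ω z y * Φ y)
          (Finset.subset_univ ({⟨zn+1, hlt⟩, ⟨zn-1, by omega⟩} : Finset (Fin N)))
        rwa [Finset.sum_pair hne] at hsub
      refine le_trans ?_ (add_le_add_right hpair 1)
      have hid : phifun N h zn = 1 + (ω (zn:ℤ) * phifun N h (zn+1) +
          (1 - ω (zn:ℤ)) * phifun N h (zn-1)) := by
        have e1 : phifun N h (zn-1) = h (zn-1) + phifun N h zn := by
          rw [phifun, Finset.sum_eq_sum_Ico_succ_bot (by omega : zn-1 < N)]
          rw [show zn-1+1 = zn from by omega]; rfl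
        have e2 : phifun N h zn = h zn + phifun N h (zn+1) := by
          rw [phifun, Finset.sum_eq_sum_Ico_succ_bot (by omega : zn < N)]; rfl
        have e3 := hrec zn hz1 (by omega)
        linear_combination (ω (zn:ℤ)) * e2 + (ω (zn:ℤ) - 1) * e1 + e3
      have hw0 := (hω01 (zn:ℤ)).1
      have hw1 := (hω01 (zn:ℤ)).2
      have hp1 := phifun_nonneg (N := N) hh1 (zn+1)
      have hp2 := phifun_nonneg (N := N) hh1 (zn-1)
      rw [hΦ]
      simp only []
      rw [hid, ENNReal.ofReal_add (by norm_num) (by nlinarith),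
        ENNReal.ofReal_add (by nlinarith) (by nlinarith), ENNReal.ofReal_one,
        ENNReal.ofReal_mul hw0, ENNReal.ofReal_mul (by linarith)]
      rw [hy1, hy2]
  · -- z = N-1
    have hz1 : 1 ≤ (z:ℕ) := by omega
    set zn := (z:ℕ) with hzn
    have hy2 : Kf N ω z ⟨zn-1, by omega⟩ = ENNReal.ofReal (1 - ω (zn:ℤ)) := by
      rw [Kf, envStep, if_neg, if_pos]
      · rfl
      · simp only [cI]; push_cast [Nat.cast_sub hz1]; ring
      · simp only [cI]; push_cast [Nat.cast_sub hz1]; omega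
    have hone : Kf N ω z ⟨zn-1, by omega⟩ * Φ ⟨zn-1, by omega⟩ ≤ Tker N ω Φ z := hextract _
    refine le_trans ?_ (add_le_add_right hone 1)
    have e1 : phifun N h (zn-1) = h (zn-1) + h zn := by
      rw [phifun, Finset.sum_eq_sum_Ico_succ_bot (by omega : zn-1 < N),
        show zn-1+1 = zn from by omega, show (Finset.Ico zn N) = {zn} from by
          ext t; simp [Finset.mem_Ico]; omega]
      rw [Finset.sum_singleton]
    have e2 : phifun N h zn = h zn := by
      rw [phifun, show (Finset.Ico zn N) = {zn} from by
        ext t; simp [Finset.mem_Ico]; omega,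
        Finset.sum_singleton]
    have e3 := hrec zn hz1 (by omega)
    have hw0 := (hω01 (zn:ℤ)).1
    have hw1 := (hω01 (zn:ℤ)).2
    have hhz := hh1 zn (by omega)
    have hhz1 := hh1 (zn-1) (by omega)
    have hid : phifun N h zn ≤ 1 + (1 - ω (zn:ℤ)) * phifun N h (zn-1) := by
      rw [e1, e2]
      nlinarith [e3]
    rw [hΦ]
    simp only []
    refine le_trans (ENNReal.ofReal_le_ofReal hid) ?_
    rw [ENNReal.ofReal_add (by norm_num) (by nlinarith [phifun_nonneg (N := N) hh1 (zn-1)]),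
      ENNReal.ofReal_one, ENNReal.ofReal_mul (by linarith), hy2]
  · exact absurd z.isLt (by omega)

lemma Tker_addfun (u w : Fin N → ℝ≥0∞) :
    Tker N ω (fun y => u y + w y) = fun z => Tker N ω u z + Tker N ω w z := by
  funext z
  simp only [Tker, mul_add, Finset.sum_add_distrib]

lemma Tker_sumfun {M : ℕ} (F : ℕ → Fin N → ℝ≥0∞) (z : Fin N) :
    Tker N ω (fun y => ∑ n ∈ range M, F n y) z = ∑ n ∈ range M, Tker N ω (F n) z := by
  simp only [Tker, Finset.mul_sum]
  rw [Finset.sum_comm]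

lemma subiter (Φ : Fin N → ℝ≥0∞) (hsub : ∀ z, Φ z ≤ 1 + Tker N ω Φ z) :
    ∀ (M : ℕ) (z : Fin N), Φ z ≤ (∑ n ∈ range M, vs N ω n z) + (Tker N ω)^[M] Φ z := by
  intro M
  induction M with
  | zero => intro z; simp
  | succ M ih =>
    intro z
    refine (hsub z).trans ?_
    have hmono : Tker N ω Φ z ≤ Tker N ω (fun y => (∑ n ∈ range M, vs N ω n y) +
        (Tker N ω)^[M] Φ y) z := Tker_mono (fun y => ih y) z
    have heq : Tker N ω (fun y => (∑ n ∈ range M, vs N ω n y) + (Tker N ω)^[M] Φ y) z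
        = (∑ n ∈ range M, vs N ω (n+1) z) + (Tker N ω)^[M+1] Φ z := by
      rw [Tker_addfun]
      simp only []
      rw [Tker_sumfun]
      congr 1
      · apply Finset.sum_congr rfl
        intro n _
        rw [vs, vs, Function.iterate_succ_apply']
      · rw [Function.iterate_succ_apply']
    have hfin : (1:ℝ≥0∞) + ((∑ n ∈ range M, vs N ω (n+1) z) + (Tker N ω)^[M+1] Φ z)
        = (∑ n ∈ range (M+1), vs N ω n z) + (Tker N ω)^[M+1] Φ z := by
      rw [Finset.sum_range_succ' (fun n => vs N ω n z)]
      have : vs N ω 0 z = 1 := rfl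
      rw [this]
      ring
    calc 1 + Tker N ω Φ z ≤ 1 + ((∑ n ∈ range M, vs N ω (n+1) z) + (Tker N ω)^[M+1] Φ z) := by
          rw [← heq]; exact add_le_add_right hmono 1
      _ = _ := hfin

/-! ### Path sums -/

def pathOf {N : ℕ} (n : ℕ) (w : Fin (n+1) → Fin N) : ℕ → ℤ :=
  fun i => if h : i < n+1 then ((w ⟨i, h⟩ : ℕ) : ℤ) else 0

lemma pathsum (N : ℕ) (ω : ℤ → ℝ) : ∀ (n : ℕ) (z : Fin N),
    (∑ w : Fin (n+1) → Fin N, if w 0 = z then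
      ∏ i ∈ range n, ENNReal.ofReal (envStep ω (pathOf n w i) (pathOf n w (i+1))) else 0)
    = vs N ω n z := by
  intro n
  induction n with
  | zero =>
    intro z
    rw [Fintype.sum_equiv (Equiv.funUnique (Fin 1) (Fin N))
      _ (fun a => if a = z then 1 else 0) (fun w => by simp)]
    simp [vs]
  | succ n ih =>
    intro z
    have hvs : vs N ω (n+1) z = ∑ a : Fin N, Kf N ω z a * vs N ω n a := by
      rw [vs, Function.iterate_succ_apply']
      rfl
    rw [hvs]
    rw [Fintype.sum_equiv (Fin.consEquiv (n := n+1) (fun _ => Fin N)).symm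
      _ (fun pr => if pr.1 = z then
          Kf N ω z (pr.2 0) *
            ∏ i ∈ range n, ENNReal.ofReal (envStep ω (pathOf n pr.2 i) (pathOf n pr.2 (i+1)))
        else 0) ?_]
    · rw [Fintype.sum_prod_type]
      have hpull : ∀ a : Fin N, (∑ w' : Fin (n+1) → Fin N, if a = z then
            Kf N ω z (w' 0) *
              ∏ i ∈ range n, ENNReal.ofReal (envStep ω (pathOf n w' i) (pathOf n w' (i+1)))
          else 0)
          = if a = z then (∑ w' : Fin (n+1) → Fin N, Kf N ω z (w' 0) *
              ∏ i ∈ range n, ENNReal.ofReal (envStep ω (pathOf n w' i) (pathOf n w' (i+1))))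
            else 0 := by
        intro a
        split_ifs <;> simp
      rw [Finset.sum_congr rfl (fun a _ => hpull a), Finset.sum_ite_eq' Finset.univ z]
      rw [if_pos (Finset.mem_univ z)]
      -- now: ∑ w', Kf z (w' 0) * ∏ ... = ∑ a, Kf z a * vs n a
      calc (∑ w' : Fin (n+1) → Fin N, Kf N ω z (w' 0) *
              ∏ i ∈ range n, ENNReal.ofReal (envStep ω (pathOf n w' i) (pathOf n w' (i+1))))
          = ∑ w' : Fin (n+1) → Fin N, ∑ a : Fin N, (if w' 0 = a then Kf N ω z a *
              ∏ i ∈ range n, ENNReal.ofReal (envStep ω (pathOf n w' i) (pathOf n w' (i+1)))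
            else 0) := by
            refine Finset.sum_congr rfl (fun w' _ => ?_)
            rw [Finset.sum_ite_eq Finset.univ (w' 0), if_pos (Finset.mem_univ _)]
        _ = ∑ a : Fin N, ∑ w' : Fin (n+1) → Fin N, (if w' 0 = a then Kf N ω z a *
              ∏ i ∈ range n, ENNReal.ofReal (envStep ω (pathOf n w' i) (pathOf n w' (i+1)))
            else 0) := Finset.sum_comm
        _ = ∑ a : Fin N, Kf N ω z a * ∑ w' : Fin (n+1) → Fin N, (if w' 0 = a then
              ∏ i ∈ range n, ENNReal.ofReal (envStep ω (pathOf n w' i) (pathOf n w' (i+1)))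
            else 0) := by
            refine Finset.sum_congr rfl (fun a _ => ?_)
            rw [Finset.mul_sum]
            refine Finset.sum_congr rfl (fun w' _ => ?_)
            rw [mul_ite, mul_zero]
        _ = ∑ a : Fin N, Kf N ω z a * vs N ω n a := by
            refine Finset.sum_congr rfl (fun a _ => ?_)
            rw [ih a]
    · intro w
      simp only [Fin.consEquiv_symm_apply]
      by_cases hw : w 0 = z
      · rw [if_pos hw, if_pos hw]
        rw [Finset.prod_range_succ']
        rw [mul_comm]
        congr 1
        · -- f 0 = Kf z (tail w 0)
          have h0 : pathOf (n+1) w 0 = cI z := by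
            rw [pathOf]
            rw [dif_pos (by omega : 0 < n+2)]
            rw [show (⟨0, by omega⟩ : Fin (n+2)) = 0 from rfl, hw]
            rfl
          have h1 : pathOf (n+1) w 1 = cI (Fin.tail w 0) := by
            rw [pathOf, dif_pos (by omega : 1 < n+2)]
            rfl
          rw [Kf, h0, h1]
        · refine Finset.prod_congr rfl (fun i hi => ?_)
          have hi' : i < n := Finset.mem_range.mp hi
          have e1 : pathOf (n+1) w (i+1) = pathOf n (Fin.tail w) i := by
            rw [pathOf, pathOf, dif_pos (by omega : i+1 < n+2), dif_pos (by omega : i < n+1)]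
            congr 1
          have e2 : pathOf (n+1) w (i+2) = pathOf n (Fin.tail w) (i+1) := by
            rw [pathOf, pathOf, dif_pos (by omega : i+2 < n+2), dif_pos (by omega : i+1 < n+1)]
            congr 1
          rw [show i + 1 + 1 = i + 2 from rfl, e1, e2]
      · rw [if_neg hw, if_neg hw]

/-! ### Measure part -/

lemma hit_iff (f : ℕ → ℤ) (c : ℤ) (n : ℕ) :
    ((n : ℕ∞) < hitTime f c) ↔ ∀ i ≤ n, f i ≠ c := by
  constructor
  · intro hlt i hi hfi
    have h1 : hitTime f c ≤ (i : ℕ∞) := by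
      refine le_trans (iInf_le _ i) ?_
      exact iInf_le _ hfi
    have h2 : (i : ℕ∞) ≤ (n : ℕ∞) := by exact_mod_cast hi
    exact absurd (lt_of_lt_of_le hlt (h1.trans h2)) (lt_irrefl _)
  · intro hall
    have hsucc : ((n+1 : ℕ) : ℕ∞) ≤ hitTime f c := by
      refine le_iInf (fun m => le_iInf (fun hm => ?_))
      have : n + 1 ≤ m := by
        by_contra hcon
        exact hall m (by omega) hm
      exact_mod_cast this
    refine lt_of_lt_of_le ?_ hsucc
    exact_mod_cast Nat.lt_succ_self n

lemma count_le (t : ℕ∞) (M : ℕ) :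
    (∑ n ∈ range M, if (n : ℕ∞) < t then (1 : ℝ≥0∞) else 0) ≤ (t : ℝ≥0∞) := by
  cases t with
  | top => exact le_trans (le_of_eq rfl) (by simp)
  | coe t' =>
    have hcongr : ∀ n : ℕ, (if (n : ℕ∞) < (t' : ℕ∞) then (1 : ℝ≥0∞) else 0)
        = if n < t' then 1 else 0 := by
      intro n
      congr 1
      simp [Nat.cast_lt]
    rw [Finset.sum_congr rfl (fun n _ => hcongr n), Finset.sum_boole]
    have hcard : ((range M).filter (fun n => n < t')).card ≤ t' :=
      le_trans (Finset.card_le_card (fun x hx => by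
        simp only [Finset.mem_filter, Finset.mem_range] at hx ⊢
        exact Finset.mem_range.mpr hx.2)) (by simp [Finset.card_range])
    calc ((((range M).filter (fun n => n < t')).card : ℕ) : ℝ≥0∞)
        ≤ (t' : ℝ≥0∞) := by exact_mod_cast hcard
      _ = ((t' : ℕ∞) : ℝ≥0∞) := by simp

section Measures
variable {N : ℕ} {ω : ℤ → ℝ} (P : Measure (ℕ → ℤ))

def ASet (c : ℤ) (n : ℕ) : Set (ℕ → ℤ) := {f | ∀ i ≤ n, f i ≠ c}

lemma ASet_meas (c : ℤ) (n : ℕ) : MeasurableSet (ASet c n) := by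
  have : ASet c n = ⋂ i ∈ Set.Iic n, (fun f : ℕ → ℤ => f i) ⁻¹' ({c}ᶜ) := by
    ext f
    simp [ASet, Set.mem_iInter]
  rw [this]
  exact MeasurableSet.biInter (Set.to_countable _)
    (fun i _ => (measurable_pi_apply i) (measurableSet_singleton c).compl)

lemma cyl_meas (n : ℕ) (path : ℕ → ℤ) :
    MeasurableSet {f : ℕ → ℤ | ∀ i ≤ n, f i = path i} := by
  have : {f : ℕ → ℤ | ∀ i ≤ n, f i = path i}
      = ⋂ i ∈ Set.Iic n, (fun f : ℕ → ℤ => f i) ⁻¹' {path i} := by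
    ext f
    simp [Set.mem_iInter]
  rw [this]
  exact MeasurableSet.biInter (Set.to_countable _)
    (fun i _ => (measurable_pi_apply i) (measurableSet_singleton _))

lemma layer_le (M : ℕ) :
    (∑ n ∈ range M, P (ASet ((N:ℕ):ℤ) n)) ≤ ∫⁻ f, ((hitTime f ((N:ℕ):ℤ) : ℕ∞) : ℝ≥0∞) ∂P := by
  have hmeas : ∀ n : ℕ, Measurable ((ASet ((N:ℕ):ℤ) n).indicator (1 : (ℕ → ℤ) → ℝ≥0∞)) :=
    fun n => measurable_one.indicator (ASet_meas _ n)
  calc (∑ n ∈ range M, P (ASet ((N:ℕ):ℤ) n))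
      = ∑ n ∈ range M, ∫⁻ f, (ASet ((N:ℕ):ℤ) n).indicator 1 f ∂P := by
        refine Finset.sum_congr rfl (fun n _ => ?_)
        rw [MeasureTheory.lintegral_indicator_one (ASet_meas _ n)]
    _ = ∫⁻ f, ∑ n ∈ range M, (ASet ((N:ℕ):ℤ) n).indicator 1 f ∂P := by
        rw [MeasureTheory.lintegral_finset_sum _ (fun n _ => hmeas n)]
    _ ≤ ∫⁻ f, ((hitTime f ((N:ℕ):ℤ) : ℕ∞) : ℝ≥0∞) ∂P := by
        refine MeasureTheory.lintegral_mono (fun f => ?_)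
        have hind : ∀ n : ℕ, (ASet ((N:ℕ):ℤ) n).indicator (1 : (ℕ → ℤ) → ℝ≥0∞) f
            = if (n : ℕ∞) < hitTime f ((N:ℕ):ℤ) then 1 else 0 := by
          intro n
          classical
          rw [Set.indicator_apply]
          by_cases hf : f ∈ ASet ((N:ℕ):ℤ) n
          · rw [if_pos hf, if_pos ((hit_iff f _ n).mpr hf)]
            rfl
          · rw [if_neg hf, if_neg (fun hcon => hf ((hit_iff f _ n).mp hcon))]
        rw [Finset.sum_congr rfl (fun n _ => hind n)]
        exact count_le _ M
end Measures

lemma cylsum_le {N : ℕ} {ω : ℤ → ℝ} (P : Measure (ℕ → ℤ)) (hN0 : 0 < N)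
    (hP2 : ∀ (n : ℕ) (path : ℕ → ℤ),
      P {f | ∀ i ≤ n, f i = path i} =
        (if path 0 = 0 then (1 : ℝ≥0∞) else 0) *
          ∏ i ∈ Finset.range n, ENNReal.ofReal (absorbStep N ω (path i) (path (i + 1))))
    (n : ℕ) :
    (∑ w : Fin (n+1) → Fin N, if w 0 = (⟨0, hN0⟩ : Fin N) then
      ∏ i ∈ range n, ENNReal.ofReal (envStep ω (pathOf n w i) (pathOf n w (i+1))) else 0)
    ≤ P (ASet ((N:ℕ):ℤ) n) := by
  classical
  have hterm : ∀ w : Fin (n+1) → Fin N,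
      (if w 0 = (⟨0, hN0⟩ : Fin N) then
        ∏ i ∈ range n, ENNReal.ofReal (envStep ω (pathOf n w i) (pathOf n w (i+1))) else 0)
      = P {f | ∀ i ≤ n, f i = pathOf n w i} := by
    intro w
    rw [hP2 n (pathOf n w)]
    have hpath0 : pathOf n w 0 = ((w 0 : ℕ) : ℤ) := by
      rw [pathOf, dif_pos (by omega : 0 < n+1)]
      congr
    have hprod : ∀ i ∈ range n,
        ENNReal.ofReal (absorbStep N ω (pathOf n w i) (pathOf n w (i+1)))
        = ENNReal.ofReal (envStep ω (pathOf n w i) (pathOf n w (i+1))) := by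
      intro i hi
      have hi' : i < n := Finset.mem_range.mp hi
      have : pathOf n w i = ((w ⟨i, by omega⟩ : ℕ) : ℤ) := by
        rw [pathOf, dif_pos (by omega : i < n+1)]
      rw [absorbStep, if_neg]
      rw [this]
      have hlt := (w ⟨i, by omega⟩).isLt
      omega
    rw [Finset.prod_congr rfl hprod]
    by_cases hw : w 0 = (⟨0, hN0⟩ : Fin N)
    · rw [if_pos hw, if_pos, one_mul]
      rw [hpath0, hw]
      simp
    · rw [if_neg hw, if_neg, zero_mul]
      rw [hpath0]
      intro hcon
      apply hw
      apply Fin.ext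
      simpa using hcon
  rw [Finset.sum_congr rfl (fun w _ => hterm w)]
  have hdisj : Set.PairwiseDisjoint ((Finset.univ : Finset (Fin (n+1) → Fin N)) : Set (Fin (n+1) → Fin N))
      (fun w => {f : ℕ → ℤ | ∀ i ≤ n, f i = pathOf n w i}) := by
    intro w _ w' _ hne
    refine Set.disjoint_left.mpr (fun {f} hf hf' => hne ?_)
    funext j
    have h1 := hf (j : ℕ) (by omega)
    have h2 := hf' (j : ℕ) (by omega)
    rw [pathOf, dif_pos j.isLt] at h1 h2
    apply Fin.ext
    have : ((w ⟨(j:ℕ), j.isLt⟩ : ℕ) : ℤ) = ((w' ⟨(j:ℕ), j.isLt⟩ : ℕ) : ℤ) := by rw [← h1, ← h2]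
    have hval : (w ⟨(j:ℕ), j.isLt⟩ : ℕ) = (w' ⟨(j:ℕ), j.isLt⟩ : ℕ) := by exact_mod_cast this
    rw [Fin.eta] at hval
    exact hval
  rw [← MeasureTheory.measure_biUnion_finset hdisj (fun w _ => cyl_meas n _)]
  refine measure_mono (fun f hf => ?_)
  simp only [Set.mem_iUnion, Finset.mem_coe, Finset.mem_univ, exists_true_left] at hf
  obtain ⟨w, hw⟩ := hf
  intro i hi
  have := hw i hi
  rw [pathOf, dif_pos (by omega : i < n+1)] at this
  rw [this]
  have hlt := (w ⟨i, by omega⟩).isLt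
  omega


/-- For every `(N,p,k)` environment `ω`, the expected hitting time of `N` for the
walk started at `0` satisfies `E⁰_ω[T_N] ≥ N² / ((2p−1)k + 1)`. -/
theorem expected_hitting_time_lower_bound
    (N k : ℕ) (p : ℝ) (hp : 1 / 2 < p) (hp1 : p ≤ 1) (hk1 : 1 ≤ k) (hkN : k ≤ N - 1)
    (ω : ℤ → ℝ) (hω : IsNpkEnv N k p ω)
    (P : Measure (ℕ → ℤ)) (hP : IsWalkLaw (absorbStep N ω) 0 P) :
    ENNReal.ofReal ((N : ℝ) ^ 2 / ((2 * p - 1) * k + 1)) ≤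
      ∫⁻ f, ((hitTime f (N : ℤ) : ℕ∞) : ℝ≥0∞) ∂P := by
  obtain ⟨hω01, l, hl, hlr, hω0, hωp, hωh⟩ := hω
  have hN2 : 2 ≤ N := by omega
  have hN0 : 0 < N := by omega
  have hp0 : (0:ℝ) < p := by linarith
  have hq0 : (0:ℝ) ≤ (1-p)/p := div_nonneg (by linarith) hp0.le
  have hq1 : (1-p)/p < 1 := by rw [div_lt_one hp0]; linarith
  set h : ℕ → ℝ := fun x => 2 * yseq ((1-p)/p) (driftB l) x - 1 with hhdef
  have hy1 : ∀ x, 1 ≤ yseq ((1-p)/p) (driftB l) x := yseq_ge_one hq0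
  have hh1 : ∀ z, z < N → 1 ≤ h z := by
    intro z _
    have := hy1 z
    simp only [hhdef]
    linarith
  have hh0 : h 0 = 1 := by
    rw [hhdef]
    norm_num [yseq]
  have hrec' : ∀ z : ℕ, 1 ≤ z → z < N → ω (z:ℤ) * h z = 1 + (1 - ω (z:ℤ)) * h (z-1) :=
    fun z h1 h2 => hrec (N := N) l hp hp1 ω hωp hωh z h1 h2
  have hωhalfF : ∀ z : Fin N, 1/2 ≤ ω (cI z) := by
    intro z
    rcases Nat.eq_zero_or_pos (z:ℕ) with h0 | h1
    · rw [cI, h0]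
      rw [show ((0:ℕ):ℤ) = 0 from rfl, hω0]
      norm_num
    · by_cases hd : ∃ i, l i = ((z:ℕ):ℤ)
      · obtain ⟨i, hi⟩ := hd
        rw [cI, ← hi, hωp i]
        linarith
      · rw [cI, hωh _ (by exact_mod_cast h1) (by exact_mod_cast z.isLt)
          (fun i hi => hd ⟨i, hi⟩)]
  set Φ : Fin N → ℝ≥0∞ := fun y => ENNReal.ofReal (phifun N h (y:ℕ)) with hΦdef
  set z0 : Fin N := ⟨0, hN0⟩ with hz0def
  have hsub : ∀ z : Fin N, Φ z ≤ 1 + Tker N ω Φ z :=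
    subsol hω01 hω0 hN2 hh1 hh0 hrec'
  set C : ℝ≥0∞ := ENNReal.ofReal (phifun N h 0) with hCdef
  have hΦleC : ∀ y : Fin N, Φ y ≤ C := by
    intro y
    rw [hΦdef, hCdef]
    apply ENNReal.ofReal_le_ofReal
    apply Finset.sum_le_sum_of_subset_of_nonneg
    · exact Finset.Ico_subset_Ico (Nat.zero_le _) le_rfl
    · intro z hz _
      have := hh1 z (Finset.mem_Ico.mp hz).2
      linarith
  have hiterbound : ∀ M, (Tker N ω)^[M] Φ z0 ≤ C * vs N ω M z0 := by
    intro M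
    have h1 : ∀ y, Φ y ≤ (fun y => C * (fun _ : Fin N => (1:ℝ≥0∞)) y) y := by
      intro y
      simpa using hΦleC y
    calc (Tker N ω)^[M] Φ z0 ≤ (Tker N ω)^[M] (fun y => C * (fun _ : Fin N => (1:ℝ≥0∞)) y) z0 :=
          Tker_iter_mono M h1 z0
      _ = C * vs N ω M z0 := by rw [Tker_iter_smul]; rfl
  have hvsP : ∀ n, vs N ω n z0 ≤ P (ASet ((N:ℕ):ℤ) n) := by
    intro n
    rw [← pathsum N ω n z0]
    exact cylsum_le P hN0 hP.2 n
  have hsumP : ∀ M, (∑ n ∈ range M, vs N ω n z0) ≤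
      ∫⁻ f, ((hitTime f (N : ℤ) : ℕ∞) : ℝ≥0∞) ∂P := by
    intro M
    exact le_trans (Finset.sum_le_sum (fun n _ => hvsP n)) (layer_le P M)
  have hmain : ∀ M, Φ z0 ≤ (∫⁻ f, ((hitTime f (N : ℤ) : ℕ∞) : ℝ≥0∞) ∂P) + C * vs N ω M z0 :=
    fun M => (subiter Φ hsub M z0).trans (add_le_add (hsumP M) (hiterbound M))
  set c : ℝ≥0∞ := ENNReal.ofReal (1 - (1/2:ℝ)^N) with hcdef
  have hgeo : ∀ m, vs N ω (m*N) z0 ≤ c^m := fun m => vs_geo hω01 hωhalfF (by omega) m z0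
  have hc1 : c < 1 := by
    rw [hcdef, show (1:ℝ≥0∞) = ENNReal.ofReal 1 from ENNReal.ofReal_one.symm]
    have h2 : (0:ℝ) < (1/2)^N := by positivity
    exact (ENNReal.ofReal_lt_ofReal_iff (by norm_num)).mpr (by linarith)
  have hC : C ≠ ⊤ := ENNReal.ofReal_ne_top
  have htend : Filter.Tendsto (fun m => C * c^m) Filter.atTop (nhds 0) := by
    have := ENNReal.Tendsto.const_mul (a := C)
      (ENNReal.tendsto_pow_atTop_nhds_zero_of_lt_one hc1) (Or.inr hC)
    simpa using this
  have hle : Φ z0 ≤ ∫⁻ f, ((hitTime f (N : ℤ) : ℕ∞) : ℝ≥0∞) ∂P := by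
    apply ENNReal.le_of_forall_pos_le_add
    intro ε hε _
    have hev : ∀ᶠ m in Filter.atTop, C * c^m < (ε : ℝ≥0∞) := by
      refine htend.eventually (gt_mem_nhds ?_)
      exact_mod_cast hε
    obtain ⟨m, hm⟩ := hev.exists
    refine (hmain (m*N)).trans (add_le_add le_rfl ?_)
    exact le_trans (mul_le_mul_right (hgeo m) C) hm.le
  -- core inequality
  have hcnt : cntseq (driftB l) (N-1) = k := cnt_driftB (by omega) l hl hlr
  have hcore := core_cleared (q := (1-p)/p) (b := driftB l) hq0 hq1 (N-1) k hcnt hk1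
  rw [show N - 1 + 1 = N from by omega] at hcore
  have hNr : ((N-1 : ℕ):ℝ) + 1 = (N:ℝ) := by
    have h1 : (1:ℕ) ≤ N := by omega
    rw [Nat.cast_sub h1]
    push_cast
    ring
  rw [hNr] at hcore
  have hphiT : phifun N h 0 = 2 * (∑ z ∈ range N, yseq ((1-p)/p) (driftB l) z) - (N:ℝ) := by
    rw [phifun, show Finset.Ico 0 N = range N from by rw [Finset.range_eq_Ico], hhdef]
    rw [Finset.sum_sub_distrib, Finset.sum_const, card_range, ← Finset.mul_sum]
    push_cast
    ring
  have hD : (0:ℝ) < (2*p-1)*(k:ℝ) + 1 := by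
    have hk0 : (0:ℝ) ≤ (k:ℝ) := Nat.cast_nonneg k
    nlinarith
  have hreal : (N : ℝ)^2 / ((2*p-1)*k + 1) ≤ phifun N h 0 := by
    rw [div_le_iff₀ hD, hphiT]
    have hfact : ((1 + (1-p)/p) + (k:ℝ)*(1 - (1-p)/p)) = (1 + (1-p)/p) * ((2*p-1)*(k:ℝ)+1) := by
      field_simp
      ring
    rw [hfact] at hcore
    have h1q : (0:ℝ) < 1 + (1-p)/p := by linarith
    have := (mul_le_mul_iff_right₀ h1q).mp (by
      calc (1 + (1-p)/p) * (N:ℝ)^2 ≤ (1 + (1-p)/p) * ((2*p-1)*(k:ℝ)+1) *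
            (2 * (∑ z ∈ range N, yseq ((1-p)/p) (driftB l) z) - (N:ℝ)) := hcore
        _ = (1 + (1-p)/p) * (((2*p-1)*(k:ℝ)+1) *
            (2 * (∑ z ∈ range N, yseq ((1-p)/p) (driftB l) z) - (N:ℝ))) := by ring)
    linarith
  calc ENNReal.ofReal ((N : ℝ) ^ 2 / ((2 * p - 1) * k + 1)) ≤ ENNReal.ofReal (phifun N h 0) :=
        ENNReal.ofReal_le_ofReal hreal
    _ = Φ z0 := by rw [hΦdef]
    _ ≤ _ := hle
end
end

section
/- Let ω and ω̄ be two environments on ℤ with ω(x) ≤ ω̄(x) for every x ∈ ℤ, and let T_n and T̄_n denote the first hitting time of n for random walks started at 0 in ω and ω̄ respectively. Then for every n > 0, T_n stochastically dominates T̄_n: for every t, P^0_ω(T_n > t) ≥ P^0_ω̄(T̄_n > t). -/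
open MeasureTheory Filter Finset Matrix
open scoped ENNReal
noncomputable section

/-! ### Auxiliary development -/

/-- Probability of not hitting `n` within `t` steps, started from `x`. -/
def qfun (ω : ℤ → ℝ) (n : ℤ) : ℕ → ℤ → ℝ
  | 0, x => if x = n then 0 else 1
  | (t+1), x => if x = n then 0 else
      ω x * qfun ω n t (x+1) + (1 - ω x) * qfun ω n t (x-1)

lemma qfun_nonneg (ω : ℤ → ℝ) (hω : ∀ x : ℤ, 0 ≤ ω x ∧ ω x ≤ 1) (n : ℤ) :
    ∀ t x, 0 ≤ qfun ω n t x := by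
  intro t
  induction t with
  | zero =>
    intro x; simp only [qfun]; split <;> norm_num
  | succ t ih =>
    intro x; simp only [qfun]; split
    · exact le_rfl
    · exact add_nonneg (mul_nonneg (hω x).1 (ih _))
        (mul_nonneg (by linarith [(hω x).2]) (ih _))

/-- Key comparison: monotone coupling inequality for survival probabilities. -/
lemma qfun_mono (n : ℤ) : ∀ (t : ℕ) (ω ωb : ℤ → ℝ),
    (∀ x : ℤ, 0 ≤ ω x ∧ ω x ≤ 1) → (∀ x : ℤ, 0 ≤ ωb x ∧ ωb x ≤ 1) →
    (∀ x : ℤ, ω x ≤ ωb x) → ∀ x y : ℤ, x ≤ y → y ≤ n → (2 : ℤ) ∣ (y - x) →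
    qfun ωb n t y ≤ qfun ω n t x := by
  intro t
  induction t with
  | zero =>
    intro ω ωb hω hωb hle x y hxy hyn hpar
    by_cases hy : y = n
    · simp only [qfun, if_pos hy]; split <;> norm_num
    · have hx : x ≠ n := by omega
      simp [qfun, hx, hy]
  | succ t ih =>
    intro ω ωb hω hωb hle x y hxy hyn hpar
    by_cases hy : y = n
    · rw [qfun, if_pos hy]; exact qfun_nonneg ω hω n _ x
    · have hyn' : y < n := lt_of_le_of_ne hyn hy
      have hx : x ≠ n := by omega
      rw [qfun, qfun, if_neg hx, if_neg hy]
      have h0 : 0 ≤ ω x := (hω x).1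
      have h1 : ω x ≤ 1 := (hω x).2
      have h0b : 0 ≤ ωb y := (hωb y).1
      have h1b : ωb y ≤ 1 := (hωb y).2
      rcases eq_or_lt_of_le hxy with rfl | hlt
      · -- same point
        have hA : qfun ωb n t (x+1) ≤ qfun ω n t (x+1) :=
          ih ω ωb hω hωb hle (x+1) (x+1) le_rfl (by omega) (by omega)
        have hB : qfun ωb n t (x-1) ≤ qfun ω n t (x-1) :=
          ih ω ωb hω hωb hle (x-1) (x-1) le_rfl (by omega) (by omega)
        have hAB : qfun ωb n t (x+1) ≤ qfun ωb n t (x-1) :=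
          ih ωb ωb hωb hωb (fun z => le_rfl) (x-1) (x+1) (by omega) (by omega) (by omega)
        have hlex := hle x
        nlinarith [mul_nonneg h0 (sub_nonneg.2 hA),
          mul_nonneg (by linarith : (0:ℝ) ≤ 1 - ω x) (sub_nonneg.2 hB),
          mul_nonneg (sub_nonneg.2 hlex) (sub_nonneg.2 hAB)]
      · -- x < y, hence x + 2 ≤ y by parity
        have hx2 : x + 2 ≤ y := by omega
        have hA'1 : qfun ωb n t (y+1) ≤ qfun ω n t (x+1) :=
          ih ω ωb hω hωb hle (x+1) (y+1) (by omega) (by omega) (by omega)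
        have hB'1 : qfun ωb n t (y-1) ≤ qfun ω n t (x+1) :=
          ih ω ωb hω hωb hle (x+1) (y-1) (by omega) (by omega) (by omega)
        have hA'2 : qfun ωb n t (y+1) ≤ qfun ω n t (x-1) :=
          ih ω ωb hω hωb hle (x-1) (y+1) (by omega) (by omega) (by omega)
        have hB'2 : qfun ωb n t (y-1) ≤ qfun ω n t (x-1) :=
          ih ω ωb hω hωb hle (x-1) (y-1) (by omega) (by omega) (by omega)
        rcases le_total (qfun ωb n t (y+1)) (qfun ωb n t (y-1)) with h | h
        · nlinarith [mul_nonneg h0 (sub_nonneg.2 hB'1),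
            mul_nonneg (by linarith : (0:ℝ) ≤ 1 - ω x) (sub_nonneg.2 hB'2),
            mul_nonneg h0b (sub_nonneg.2 h)]
        · nlinarith [mul_nonneg h0 (sub_nonneg.2 hA'1),
            mul_nonneg (by linarith : (0:ℝ) ≤ 1 - ω x) (sub_nonneg.2 hA'2),
            mul_nonneg (by linarith : (0:ℝ) ≤ 1 - ωb y) (sub_nonneg.2 h)]

/-- The sum over cylinders of length `m` avoiding `n`, starting from `x`. -/
def wG (ω : ℤ → ℝ) (n : ℤ) (m : ℕ) (x : ℤ) : ℝ≥0∞ :=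
  ∑' v : Fin (m+1) → ℤ,
    (if v 0 = x ∧ ∀ i, v i ≠ n then (1 : ℝ≥0∞) else 0) *
      ∏ i : Fin m, ENNReal.ofReal (envStep ω (v i.castSucc) (v i.succ))

lemma wG_zero (ω : ℤ → ℝ) (n : ℤ) (x : ℤ) :
    wG ω n 0 x = if x = n then 0 else 1 := by
  rw [wG, tsum_eq_single (fun _ => x)]
  · by_cases h : x = n <;> simp [h]
  · intro v hv
    have h0 : v 0 ≠ x := by
      intro h
      refine hv (funext fun i => ?_)
      have hi : i = 0 := by apply Fin.ext; have := i.isLt; omega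
      rw [hi]; exact h
    simp [h0]

lemma wG_succ (ω : ℤ → ℝ) (n : ℤ) (m : ℕ) (x : ℤ) :
    wG ω n (m+1) x = if x = n then 0 else
      ENNReal.ofReal (ω x) * wG ω n m (x+1) +
        ENNReal.ofReal (1 - ω x) * wG ω n m (x-1) := by
  classical
  set F : (Fin (m+2) → ℤ) → ℝ≥0∞ := fun v =>
    (if v 0 = x ∧ ∀ i, v i ≠ n then (1 : ℝ≥0∞) else 0) *
      ∏ i : Fin (m+1), ENNReal.ofReal (envStep ω (v i.castSucc) (v i.succ)) with hF
  have h1 : wG ω n (m+1) x = ∑' p : ℤ × (Fin (m+1) → ℤ), F (Fin.cons p.1 p.2) := by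
    rw [wG]
    exact ((Fin.consEquiv (fun _ : Fin (m+2) => ℤ)).tsum_eq F).symm
  rw [h1, ENNReal.tsum_prod']
  have hcons : ∀ (a : ℤ) (w : Fin (m+1) → ℤ),
      F (Fin.cons a w) =
        (if a = x ∧ a ≠ n ∧ ∀ i, w i ≠ n then (1 : ℝ≥0∞) else 0) *
          (ENNReal.ofReal (envStep ω a (w 0)) *
            ∏ i : Fin m, ENNReal.ofReal (envStep ω (w i.castSucc) (w i.succ))) := by
    intro a w
    have hind : ((Fin.cons a w : Fin (m+2) → ℤ) 0 = x ∧
        ∀ i, (Fin.cons a w : Fin (m+2) → ℤ) i ≠ n) ↔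
        (a = x ∧ a ≠ n ∧ ∀ i, w i ≠ n) := by
      rw [Fin.cons_zero]
      constructor
      · rintro ⟨h1, h2⟩
        refine ⟨h1, ?_, ?_⟩
        · have := h2 0; rwa [Fin.cons_zero] at this
        · intro i; have := h2 i.succ; rwa [Fin.cons_succ] at this
      · rintro ⟨h1, h2, h3⟩
        refine ⟨h1, fun i => ?_⟩
        rcases Fin.eq_zero_or_eq_succ i with rfl | ⟨j, rfl⟩
        · rwa [Fin.cons_zero]
        · rw [Fin.cons_succ]; exact h3 j
    have hprod : (∏ i : Fin (m+1), ENNReal.ofReal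
          (envStep ω ((Fin.cons a w : Fin (m+2) → ℤ) i.castSucc)
            ((Fin.cons a w : Fin (m+2) → ℤ) i.succ))) =
        ENNReal.ofReal (envStep ω a (w 0)) *
          ∏ i : Fin m, ENNReal.ofReal (envStep ω (w i.castSucc) (w i.succ)) := by
      rw [Fin.prod_univ_succ]
      refine congrArg₂ (· * ·) rfl (Finset.prod_congr rfl fun i _ => ?_)
      rw [← Fin.succ_castSucc, Fin.cons_succ, Fin.cons_succ]
    simp only [hF]
    rw [if_congr hind rfl rfl, hprod]
  by_cases hx : x = n
  · rw [if_pos hx]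
    have : ∀ a : ℤ, ∑' w : Fin (m+1) → ℤ, F (Fin.cons a w) = 0 := by
      intro a
      rw [ENNReal.tsum_eq_zero]
      intro w
      rw [hcons]
      have : ¬ (a = x ∧ a ≠ n ∧ ∀ i, w i ≠ n) := by
        rintro ⟨rfl, h2, _⟩; exact h2 hx
      rw [if_neg this, zero_mul]
    simp [this]
  · rw [if_neg hx]
    rw [tsum_eq_single x]
    · have key : ∀ w : Fin (m+1) → ℤ,
          F (Fin.cons x w) =
            ENNReal.ofReal (ω x) *
              ((if w 0 = x + 1 ∧ ∀ i, w i ≠ n then (1 : ℝ≥0∞) else 0) *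
                ∏ i : Fin m, ENNReal.ofReal (envStep ω (w i.castSucc) (w i.succ))) +
            ENNReal.ofReal (1 - ω x) *
              ((if w 0 = x - 1 ∧ ∀ i, w i ≠ n then (1 : ℝ≥0∞) else 0) *
                ∏ i : Fin m, ENNReal.ofReal (envStep ω (w i.castSucc) (w i.succ))) := by
        intro w
        rw [hcons]
        by_cases hav : ∀ i, w i ≠ n
        · by_cases h1 : w 0 = x + 1
          · rw [if_pos ⟨rfl, hx, hav⟩, if_pos ⟨h1, hav⟩,
              if_neg (by rintro ⟨h2, -⟩; omega)]
            rw [envStep, if_pos h1]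
            ring
          · by_cases h2 : w 0 = x - 1
            · rw [if_pos ⟨rfl, hx, hav⟩, if_neg (by rintro ⟨h1', -⟩; omega),
                if_pos ⟨h2, hav⟩]
              rw [envStep, if_neg h1, if_pos h2]
              ring
            · rw [if_pos ⟨rfl, hx, hav⟩, if_neg (by rintro ⟨h1', -⟩; omega),
                if_neg (by rintro ⟨h2', -⟩; omega)]
              rw [envStep, if_neg h1, if_neg h2]
              simp
        · rw [if_neg (by rintro ⟨-, -, h⟩; exact hav h),
            if_neg (by rintro ⟨-, h⟩; exact hav h),
            if_neg (by rintro ⟨-, h⟩; exact hav h)]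
          simp
      calc ∑' w : Fin (m+1) → ℤ, F (Fin.cons x w)
          = ∑' w : Fin (m+1) → ℤ,
              (ENNReal.ofReal (ω x) *
                ((if w 0 = x + 1 ∧ ∀ i, w i ≠ n then (1 : ℝ≥0∞) else 0) *
                  ∏ i : Fin m, ENNReal.ofReal (envStep ω (w i.castSucc) (w i.succ))) +
              ENNReal.ofReal (1 - ω x) *
                ((if w 0 = x - 1 ∧ ∀ i, w i ≠ n then (1 : ℝ≥0∞) else 0) *
                  ∏ i : Fin m, ENNReal.ofReal (envStep ω (w i.castSucc) (w i.succ)))) :=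
            tsum_congr key
        _ = ENNReal.ofReal (ω x) * wG ω n m (x+1) +
              ENNReal.ofReal (1 - ω x) * wG ω n m (x-1) := by
            rw [ENNReal.tsum_add, ENNReal.tsum_mul_left, ENNReal.tsum_mul_left, wG, wG]
    · intro a ha
      rw [ENNReal.tsum_eq_zero]
      intro w
      rw [hcons, if_neg (by rintro ⟨h1, -⟩; exact ha h1), zero_mul]

lemma wG_eq (ω : ℤ → ℝ) (hω : ∀ x : ℤ, 0 ≤ ω x ∧ ω x ≤ 1) (n : ℤ) :
    ∀ m x, wG ω n m x = ENNReal.ofReal (qfun ω n m x) := by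
  intro m
  induction m with
  | zero =>
    intro x
    rw [wG_zero]
    by_cases h : x = n <;> simp [qfun, h]
  | succ m ih =>
    intro x
    rw [wG_succ]
    by_cases h : x = n
    · simp [qfun, h]
    · rw [if_neg h, ih, ih]
      have e : qfun ω n (m+1) x =
          ω x * qfun ω n m (x+1) + (1 - ω x) * qfun ω n m (x-1) := by
        rw [qfun, if_neg h]
      rw [e, ENNReal.ofReal_add
        (mul_nonneg (hω x).1 (qfun_nonneg ω hω n m (x+1)))
        (mul_nonneg (by linarith [(hω x).2]) (qfun_nonneg ω hω n m (x-1))),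
        ENNReal.ofReal_mul (hω x).1,
        ENNReal.ofReal_mul (by linarith [(hω x).2] : (0:ℝ) ≤ 1 - ω x)]

/-- Extend a finite vector to a trajectory. -/
def extPath (m : ℕ) (v : Fin (m+1) → ℤ) : ℕ → ℤ :=
  fun i => if h : i < m + 1 then v ⟨i, h⟩ else 0

lemma walkLaw_avoid (ω : ℤ → ℝ) (n : ℤ) (P : Measure (ℕ → ℤ))
    (hP : IsWalkLaw (envStep ω) 0 P) (m : ℕ) :
    P {f | ∀ i ≤ m, f i ≠ n} = wG ω n m 0 := by
  classical
  set S : Set (Fin (m+1) → ℤ) := {v | ∀ i, v i ≠ n} with hS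
  have hset : {f : ℕ → ℤ | ∀ i ≤ m, f i ≠ n} =
      ⋃ v : S, {f : ℕ → ℤ | ∀ i ≤ m, f i = extPath m (v : Fin (m+1) → ℤ) i} := by
    ext f
    simp only [Set.mem_setOf_eq, Set.mem_iUnion]
    constructor
    · intro hf
      refine ⟨⟨fun i => f i, fun i => hf i (by omega)⟩, ?_⟩
      intro i hi
      simp only [extPath]
      rw [dif_pos (by omega : i < m + 1)]
    · rintro ⟨⟨v, hv⟩, hfv⟩ i hi
      rw [hfv i hi]
      simp only [extPath]
      rw [dif_pos (by omega : i < m + 1)]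
      exact hv _
  have hmeas : ∀ v : S, MeasurableSet
      {f : ℕ → ℤ | ∀ i ≤ m, f i = extPath m (v : Fin (m+1) → ℤ) i} := by
    intro v
    have : {f : ℕ → ℤ | ∀ i ≤ m, f i = extPath m (v : Fin (m+1) → ℤ) i} =
        ⋂ (i : ℕ) (_ : i ≤ m), (fun f : ℕ → ℤ => f i) ⁻¹' {extPath m (v : Fin (m+1) → ℤ) i} := by
      ext f; simp [Set.mem_iInter]
    rw [this]
    exact MeasurableSet.iInter fun i => MeasurableSet.iInter fun _ =>
      (measurable_pi_apply i) (measurableSet_singleton _)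
  have hdisj : Pairwise (Function.onFun Disjoint fun v : S =>
      {f : ℕ → ℤ | ∀ i ≤ m, f i = extPath m (v : Fin (m+1) → ℤ) i}) := by
    intro v v' hvv'
    rw [Function.onFun, Set.disjoint_left]
    intro f hf hf'
    apply hvv'
    apply Subtype.ext
    funext i
    have h1 := hf i.val (by omega)
    have h2 := hf' i.val (by omega)
    rw [h1] at h2
    simp only [extPath] at h2
    rw [dif_pos i.isLt, dif_pos i.isLt] at h2
    simpa using h2
  rw [hset, measure_iUnion hdisj hmeas]
  have hterm : ∀ v : Fin (m+1) → ℤ, (∀ i, v i ≠ n) →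
      P {f : ℕ → ℤ | ∀ i ≤ m, f i = extPath m v i} =
        (if v 0 = 0 ∧ ∀ i, v i ≠ n then (1:ℝ≥0∞) else 0) *
          ∏ i : Fin m, ENNReal.ofReal (envStep ω (v i.castSucc) (v i.succ)) := by
    intro v hv
    rw [hP.2 m (extPath m v)]
    congr 1
    · have h0 : extPath m v 0 = v 0 := by
        simp only [extPath]; rw [dif_pos (by omega : 0 < m + 1)]
        exact congrArg v (Fin.ext (by simp))
      rw [h0]
      have hiff : (v 0 = 0 ∧ ∀ i, v i ≠ n) ↔ v 0 = 0 := and_iff_left hv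
      rw [if_congr hiff.symm rfl rfl]
    · rw [Finset.prod_range fun i => ENNReal.ofReal (envStep ω (extPath m v i) (extPath m v (i+1)))]
      apply Finset.prod_congr rfl
      intro i _
      have e1 : extPath m v (i : ℕ) = v i.castSucc := by
        simp only [extPath]; rw [dif_pos (by omega : (i : ℕ) < m + 1)]
        exact congrArg v (Fin.ext (by simp))
      have e2 : extPath m v ((i : ℕ) + 1) = v i.succ := by
        simp only [extPath]; rw [dif_pos (by omega : (i : ℕ) + 1 < m + 1)]
        exact congrArg v (Fin.ext (by simp))
      rw [e1, e2]
  calc (∑' v : S, P {f : ℕ → ℤ | ∀ i ≤ m, f i = extPath m (v : Fin (m+1) → ℤ) i})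
      = ∑' v : S, (if (v : Fin (m+1) → ℤ) 0 = 0 ∧ ∀ i, (v : Fin (m+1) → ℤ) i ≠ n
            then (1:ℝ≥0∞) else 0) *
          ∏ i : Fin m, ENNReal.ofReal (envStep ω ((v : Fin (m+1) → ℤ) i.castSucc)
            ((v : Fin (m+1) → ℤ) i.succ)) :=
        tsum_congr fun v => hterm v.1 v.2
    _ = ∑' v : Fin (m+1) → ℤ, Set.indicator S (fun v =>
          (if v 0 = 0 ∧ ∀ i, v i ≠ n then (1:ℝ≥0∞) else 0) *
            ∏ i : Fin m, ENNReal.ofReal (envStep ω (v i.castSucc) (v i.succ))) v :=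
        _root_.tsum_subtype S (fun v : Fin (m+1) → ℤ =>
          (if v 0 = 0 ∧ ∀ i, v i ≠ n then (1:ℝ≥0∞) else 0) *
            ∏ i : Fin m, ENNReal.ofReal (envStep ω (v i.castSucc) (v i.succ)))
    _ = wG ω n m 0 := by
        rw [wG]
        apply tsum_congr
        intro v
        by_cases hv : v ∈ S
        · rw [Set.indicator_of_mem hv]
        · rw [Set.indicator_of_notMem hv, if_neg (fun h => hv h.2), zero_mul]

/-- If `ω(x) ≤ ω̄(x)` for every `x`, then the hitting time of `n > 0` in `ω`
stochastically dominates the one in `ω̄`: `P⁰_ω(T_n > t) ≥ P⁰_ω̄(T̄_n > t)` for all `t`. -/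
theorem hitting_time_stochastic_domination
    (ω ωbar : ℤ → ℝ)
    (hω : ∀ x : ℤ, 0 ≤ ω x ∧ ω x ≤ 1) (hωbar : ∀ x : ℤ, 0 ≤ ωbar x ∧ ωbar x ≤ 1)
    (hle : ∀ x : ℤ, ω x ≤ ωbar x)
    (n : ℤ) (hn : 0 < n)
    (P Pbar : Measure (ℕ → ℤ))
    (hP : IsWalkLaw (envStep ω) 0 P) (hPbar : IsWalkLaw (envStep ωbar) 0 Pbar)
    (t : ℕ∞) :
    Pbar {f | t < hitTime f n} ≤ P {f | t < hitTime f n} := by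
  cases t with
  | top =>
    have hempty : {f : ℕ → ℤ | (⊤ : ℕ∞) < hitTime f n} = ∅ := by
      ext f; simp [not_top_lt]
    rw [hempty]
    simp
  | coe m =>
    have hiff : ∀ f : ℕ → ℤ, ((m : ℕ∞) < hitTime f n ↔ ∀ i ≤ m, f i ≠ n) := by
      intro f
      constructor
      · intro h i hi hcon
        have h1 : hitTime f n ≤ (i : ℕ∞) := iInf₂_le i hcon
        have h2 : (i : ℕ∞) ≤ (m : ℕ∞) := by exact_mod_cast hi
        exact absurd h (not_lt.2 (h1.trans h2))
      · intro h
        have h1 : ((m + 1 : ℕ) : ℕ∞) ≤ hitTime f n := by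
          apply le_iInf₂
          intro k hk
          have : m + 1 ≤ k := by
            by_contra hc
            exact h k (by omega) hk
          exact_mod_cast this
        calc (m : ℕ∞) < ((m + 1 : ℕ) : ℕ∞) := by exact_mod_cast Nat.lt_succ_self m
          _ ≤ hitTime f n := h1
    have hseteq : ∀ (z : ℤ), {f : ℕ → ℤ | ((m : ℕ) : ℕ∞) < hitTime f n} =
        {f : ℕ → ℤ | ∀ i ≤ m, f i ≠ n} := fun _ => Set.ext fun f => hiff f
    rw [hseteq n, walkLaw_avoid ω n P hP m, walkLaw_avoid ωbar n Pbar hPbar m,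
      wG_eq ω hω n m 0, wG_eq ωbar hωbar n m 0]
    exact ENNReal.ofReal_le_ofReal
      (qfun_mono n m ω ωbar hω hωbar hle 0 0 le_rfl hn.le ⟨0, by ring⟩)
end
end
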